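/- arXiv:2012.06613 — 6 statements merged into one kernel-verified Lean document; each statement's English description precedes it below -/
import Mathlib

section
/- Let $b \ge 1$ and let $J$ be the $b \times b$ tridiagonal matrix with diagonal entries $J_{kk} = -2\lambda s_k - 1$, superdiagonal entries $J_{k,k+1} = 1$, and subdiagonal entries $J_{k+1,k} = 2\lambda s_k$, where $\lambda > 0$ and $s_1, \dots, s_b \ge 0$. Define $P_i$ to be the determinant of the top-left $i \times i$ submatrix (with $P_0 = 1$). Then $P_i = (-1)^i - 2\lambda s_i P_{i-1}$ for all $1 \le i \le b$. -/
/-!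
Expanding a leading minor of a tridiagonal matrix along its last row, and the one nonzero
off-diagonal cofactor along its last column, gives the three-term recursion
`P (n + 2) = J (n+1) (n+1) * P (n + 1) - J (n+1) n * J n (n+1) * P n`. For the Jacobian
every diagonal entry equals `-1` minus the product of the off-diagonal pair next to it, so
`E n := P (n + 1) + J (n+1) n * J n (n+1) * P n` satisfies `E (n + 1) = -E n` with `E 0 = -1`,
i.e. `E n = (-1) ^ (n + 1)`.
-/

namespace Matrix

section Zero

variable {α : Type*}

def leadingBlock (A : Matrix ℕ ℕ α) (n : ℕ) : Matrix (Fin n) (Fin n) α :=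
  A.submatrix Fin.val Fin.val

def IsTridiagonal [Zero α] (A : Matrix ℕ ℕ α) : Prop :=
  ∀ i j, j + 1 < i ∨ i + 1 < j → A i j = 0

variable {A : Matrix ℕ ℕ α}

@[simp]
theorem leadingBlock_apply (n : ℕ) (k l : Fin n) : A.leadingBlock n k l = A k l := rfl

@[simp]
theorem leadingBlock_submatrix_castSucc (n : ℕ) :
    (A.leadingBlock (n + 1)).submatrix Fin.castSucc Fin.castSucc = A.leadingBlock n :=
  rfl

end Zero

namespace IsTridiagonal

variable {R : Type*} [CommRing R] {A : Matrix ℕ ℕ R}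

theorem det_leadingBlock_submatrix_last_succAbove (hA : A.IsTridiagonal) (n : ℕ) :
    ((A.leadingBlock (n + 2)).submatrix (Fin.last (n + 1)).succAbove
      (Fin.last n).castSucc.succAbove).det = A n (n + 1) * (A.leadingBlock n).det := by
  have hlast : (Fin.last n).castSucc.succAbove (Fin.last n) = Fin.last (n + 1) :=
    Fin.succAbove_castSucc_of_le _ _ le_rfl
  rw [det_succ_column _ (Fin.last n), Fintype.sum_eq_single (Fin.last n)]
  · have hsign : (-1 : R) ^ ((Fin.last n : ℕ) + (Fin.last n : ℕ)) = 1 :=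
      Even.neg_one_pow ⟨n, rfl⟩
    simp only [submatrix_apply, submatrix_submatrix, Fin.succAbove_last, hsign, one_mul, hlast]
    congr 2
    ext k l
    simp [Fin.succAbove_castSucc_of_lt _ _ (Fin.castSucc_lt_last l)]
  · intro k hk
    have hk : (k : ℕ) < n := Fin.val_lt_last hk
    rw [submatrix_apply, Fin.succAbove_last, hlast]
    simp [hA k (n + 1) (Or.inr (by simpa using hk))]

theorem det_leadingBlock_add_two (hA : A.IsTridiagonal) (n : ℕ) :
    (A.leadingBlock (n + 2)).det = A (n + 1) (n + 1) * (A.leadingBlock (n + 1)).det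
      - A (n + 1) n * A n (n + 1) * (A.leadingBlock n).det := by
  rw [det_succ_row _ (Fin.last (n + 1)), Fin.sum_univ_castSucc,
    Fintype.sum_eq_single (Fin.last n), hA.det_leadingBlock_submatrix_last_succAbove,
    Fin.succAbove_last, leadingBlock_submatrix_castSucc]
  · have hodd : (-1 : R) ^ (n + 1 + n) = -1 := Odd.neg_one_pow ⟨n, by ring⟩
    have heven : (-1 : R) ^ (n + 1 + (n + 1)) = 1 := Even.neg_one_pow ⟨n + 1, rfl⟩
    simp only [Fin.val_last, Fin.val_castSucc, leadingBlock_apply, hodd, heven]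
    ring
  · intro j hj
    have hj : (j : ℕ) < n := Fin.val_lt_last hj
    simp [hA (n + 1) j (Or.inl (by omega))]

theorem det_leadingBlock_succ (hA : A.IsTridiagonal)
    (hdiag : ∀ n, A n n + A (n + 1) n * A n (n + 1) = -1) (n : ℕ) :
    (A.leadingBlock (n + 1)).det =
      (-1) ^ (n + 1) - A (n + 1) n * A n (n + 1) * (A.leadingBlock n).det := by
  induction n with
  | zero =>
    rw [zero_add, det_fin_one, det_fin_zero, leadingBlock_apply, Fin.val_zero]
    linear_combination hdiag 0
  | succ n ih =>
    rw [hA.det_leadingBlock_add_two, ih, eq_sub_of_add_eq (hdiag (n + 1))]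
    ring

end IsTridiagonal

end Matrix

theorem stmt0_general (b : ℕ) (lam : ℝ)
    (s : ℕ → ℝ)
    (J : Matrix ℕ ℕ ℝ)
    (hJ : ∀ i j, J i j =
      if i = j then -2 * lam * s (i + 1) - 1
      else if j = i + 1 then 1
      else if i = j + 1 then 2 * lam * s (j + 1)
      else 0)
    (P : ℕ → ℝ)
    (hP : ∀ i, i ≤ b → P i = Matrix.det (fun k l : Fin i => J k.val l.val)) :
    ∀ i, 1 ≤ i → i ≤ b → P i = (-1 : ℝ) ^ i - 2 * lam * s i * P (i - 1) := by
  have hoff : ∀ n, J (n + 1) n * J n (n + 1) = 2 * lam * s (n + 1) := fun n => by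
    rw [hJ, hJ, if_neg (by omega), if_neg (by omega), if_pos rfl, if_neg (by omega), if_pos rfl,
      mul_one]
  have hJ_tri : J.IsTridiagonal := fun i j hij => by
    rw [hJ, if_neg (by omega), if_neg (by omega), if_neg (by omega)]
  have hdiag : ∀ n, J n n + J (n + 1) n * J n (n + 1) = -1 := fun n => by
    rw [hoff, hJ, if_pos rfl]
    ring
  intro i hi hib
  obtain ⟨n, rfl⟩ : ∃ n, i = n + 1 := ⟨i - 1, by omega⟩
  rw [Nat.add_sub_cancel, hP _ hib, hP n (by omega), ← hoff]
  exact hJ_tri.det_leadingBlock_succ hdiag n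

/-- Tridiagonal determinant identity for the Po2 Jacobian:
`P i = (-1)^i - 2 λ s_i P_{i-1}` where `P i` is the top-left `i × i` minor. -/
theorem stmt0 (b : ℕ) (hb : 1 ≤ b) (lam : ℝ) (hlam : 0 < lam)
    (s : ℕ → ℝ) (hs : ∀ k, 1 ≤ k → k ≤ b → 0 ≤ s k)
    (J : Matrix ℕ ℕ ℝ)
    (hJ : ∀ i j, J i j =
      if i = j then -2 * lam * s (i + 1) - 1
      else if j = i + 1 then 1
      else if i = j + 1 then 2 * lam * s (j + 1)
      else 0)
    (P : ℕ → ℝ)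
    (hP : ∀ i, i ≤ b → P i = Matrix.det (fun k l : Fin i => J k.val l.val)) :
    ∀ i, 1 ≤ i → i ≤ b → P i = (-1 : ℝ) ^ i - 2 * lam * s i * P (i - 1) :=
  stmt0_general b lam s J hJ P hP
end

section
/- Let $b \ge 1$, $\lambda > 0$, and $s \in \mathcal{S} = \{s : 1 \ge s_1 \ge \cdots \ge s_b \ge 0\}$. The $b \times b$ tridiagonal Jacobian matrix $J(s)$ with diagonal entries $-2\lambda s_k - 1$, superdiagonal entries $1$, and subdiagonal entries $2\lambda s_k$ is invertible. -/
/-- The Jacobian `J(s)` of the Po2 mean-field model is invertible. -/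
theorem stmt2 (b : ℕ) (hb : 1 ≤ b) (lam : ℝ) (hlam : 0 < lam)
    (s : ℕ → ℝ) (hs1 : s 1 ≤ 1) (hsb : 0 ≤ s b)
    (hmono : ∀ k, 1 ≤ k → k < b → s (k + 1) ≤ s k)
    (J : Matrix (Fin b) (Fin b) ℝ)
    (hJ : ∀ i j : Fin b, J i j =
      if i = j then -2 * lam * s (i.val + 1) - 1
      else if (j : ℕ) = i.val + 1 then 1
      else if (i : ℕ) = j.val + 1 then 2 * lam * s (j.val + 1)
      else 0) :
    IsUnit J := by
  classical
  rw [Matrix.isUnit_iff_isUnit_det, isUnit_iff_ne_zero]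
  intro hdet
  obtain ⟨v, hv, hJv⟩ := Matrix.exists_mulVec_eq_zero_iff.mpr hdet
  set V : ℕ → ℝ := fun n => if h : n - 1 < b ∧ 1 ≤ n then v ⟨n - 1, h.1⟩ else 0 with hVdef
  have hVpos : ∀ n (h : n - 1 < b), 1 ≤ n → V n = v ⟨n - 1, h⟩ := by
    intro n h h2; rw [hVdef]; exact dif_pos ⟨h, h2⟩
  have hVzero : ∀ n, ¬(n - 1 < b ∧ 1 ≤ n) → V n = 0 := by
    intro n h; rw [hVdef]; exact dif_neg h
  have hV0 : V 0 = 0 := hVzero 0 (by omega)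
  have hVb1 : V (b + 1) = 0 := hVzero _ (by omega)
  have hVi : ∀ i : Fin b, V (i.val + 1) = v i := by
    intro i
    rw [hVpos (i.val + 1) (by have := i.isLt; omega) (by omega)]
    exact congrArg v (Fin.ext (by simp))
  -- row equations
  have hrow : ∀ i : Fin b,
      (-2 * lam * s (i.val + 1) - 1) * V (i.val + 1) + V (i.val + 2)
        + 2 * lam * s i.val * V i.val = 0 := by
    intro i
    have h0 : ∑ j, J i j * v j = 0 := by
      have := congrFun hJv i
      simpa [Matrix.mulVec, dotProduct] using this
    have hsplit : ∀ j : Fin b, J i j * v j =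
        (if i = j then (-2 * lam * s (i.val + 1) - 1) * v i else 0)
        + (if (j : ℕ) = i.val + 1 then v j else 0)
        + (if (i : ℕ) = (j : ℕ) + 1 then 2 * lam * s i.val * v j else 0) := by
      intro j
      rw [hJ]
      by_cases h1 : i = j
      · subst h1
        have c2 : ¬((i : ℕ) = (i : ℕ) + 1) := by omega
        simp [c2]
      · by_cases h2 : (j : ℕ) = (i : ℕ) + 1
        · have c3 : ¬((i : ℕ) = (j : ℕ) + 1) := by omega
          simp only [if_neg h1, if_pos h2, if_neg c3]
          ring
        · by_cases h3 : (i : ℕ) = (j : ℕ) + 1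
          · have hs' : s ((j : ℕ) + 1) = s (i : ℕ) := by rw [← h3]
            simp only [if_neg h1, if_neg h2, if_pos h3, hs']
            ring
          · simp only [if_neg h1, if_neg h2, if_neg h3]
            ring
    rw [Finset.sum_congr rfl (fun j _ => hsplit j)] at h0
    rw [Finset.sum_add_distrib, Finset.sum_add_distrib] at h0
    have e1 : (∑ j : Fin b, if i = j then (-2 * lam * s (i.val + 1) - 1) * v i else 0)
        = (-2 * lam * s (i.val + 1) - 1) * V (i.val + 1) := by
      rw [Finset.sum_ite_eq, hVi i]
      simp
    have e2 : (∑ j : Fin b, if (j : ℕ) = i.val + 1 then v j else 0) = V (i.val + 2) := by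
      by_cases h : i.val + 1 < b
      · have hc : ∀ j : Fin b, (if (j : ℕ) = i.val + 1 then v j else 0)
            = (if j = (⟨i.val + 1, h⟩ : Fin b) then v j else 0) := by
          intro j
          exact if_congr (by simp [Fin.ext_iff]) rfl rfl
        rw [Finset.sum_congr rfl (fun j _ => hc j), Finset.sum_ite_eq']
        simp only [Finset.mem_univ, if_true]
        rw [hVpos (i.val + 2) (by omega) (by omega)]
        exact congrArg v (Fin.ext (by simp))
      · have hc : ∀ j : Fin b, ¬((j : ℕ) = i.val + 1) := fun j => by have := j.isLt; omega
        rw [Finset.sum_congr rfl (fun j _ => if_neg (hc j)), Finset.sum_const_zero]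
        exact (hVzero _ (by omega)).symm
    have e3 : (∑ j : Fin b, if (i : ℕ) = (j : ℕ) + 1 then 2 * lam * s i.val * v j else 0)
        = 2 * lam * s i.val * V i.val := by
      by_cases h : 1 ≤ i.val
      · have hlt : i.val - 1 < b := by have := i.isLt; omega
        have hc : ∀ j : Fin b, (if (i : ℕ) = (j : ℕ) + 1 then 2 * lam * s i.val * v j else 0)
            = (if j = (⟨i.val - 1, hlt⟩ : Fin b) then 2 * lam * s i.val * v j else 0) := by
          intro j
          exact if_congr (by simp only [Fin.ext_iff]; omega) rfl rfl
        rw [Finset.sum_congr rfl (fun j _ => hc j), Finset.sum_ite_eq']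
        simp only [Finset.mem_univ, if_true]
        rw [hVpos i.val hlt h]
      · have hi0 : (i : ℕ) = 0 := by omega
        have hc : ∀ j : Fin b, ¬((i : ℕ) = (j : ℕ) + 1) := fun j => by omega
        rw [Finset.sum_congr rfl (fun j _ => if_neg (hc j)), Finset.sum_const_zero, hi0, hV0]
        ring
    rw [e1, e2, e3] at h0
    exact h0
  -- recursion
  have hrec : ∀ k, k < b → V (k + 2)
      = (2 * lam * s (k + 1) + 1) * V (k + 1) - 2 * lam * s k * V k := by
    intro k hk
    have := hrow ⟨k, hk⟩
    simp only at this
    linarith [this]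
  -- the key identity V (k+1) = 2 λ s_k V k + V 1
  have hC : ∀ k, 1 ≤ k → k ≤ b → V (k + 1) = 2 * lam * s k * V k + V 1 := by
    intro k hk
    induction k, hk using Nat.le_induction with
    | base =>
      intro _
      have h := hrec 0 (by omega)
      rw [hV0] at h
      rw [h]; ring
    | succ n hn ih =>
      intro hnb
      have h := hrec n (by omega)
      have h2 := ih (by omega)
      rw [h, h2]; ring
  -- nonnegativity of s
  have hs0 : ∀ k, 1 ≤ k → k ≤ b → 0 ≤ s k := by
    have key : ∀ j, j ≤ b → ∀ k, 1 ≤ k → k ≤ j → s j ≤ s k := by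
      intro j
      induction j with
      | zero => intro _ k hk hkj; omega
      | succ n ih =>
        intro hjb k hk hkj
        rcases Nat.eq_or_lt_of_le hkj with h | h
        · rw [h]
        · have h1 : k ≤ n := by omega
          have h2 : s (n + 1) ≤ s n := hmono n (by omega) (by omega)
          exact le_trans h2 (ih (by omega) k hk h1)
    intro k hk hkb
    exact le_trans hsb (key b le_rfl k hk hkb)
  -- V 1 * V k ≥ V 1 ^ 2
  have hprod : ∀ k, 1 ≤ k → k ≤ b → V 1 * V 1 ≤ V 1 * V k := by
    intro k hk
    induction k, hk using Nat.le_induction with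
    | base => intro _; exact le_rfl
    | succ n hn ih =>
      intro hnb
      have h2 := ih (by omega)
      have h3 := hC n hn (by omega)
      have hsn := hs0 n hn (by omega)
      have hnn : 0 ≤ V 1 * V n := le_trans (mul_self_nonneg _) h2
      have key : V 1 * V (n + 1) = 2 * lam * s n * (V 1 * V n) + V 1 * V 1 := by
        rw [h3]; ring
      have hpos : 0 ≤ 2 * lam * s n * (V 1 * V n) :=
        mul_nonneg (mul_nonneg (by linarith) hsn) hnn
      linarith
  -- conclude V 1 = 0
  have hfin := hC b hb le_rfl
  rw [hVb1] at hfin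
  have hV1 : V 1 = 0 := by
    by_contra hne
    have hq : 0 < V 1 * V 1 := mul_self_pos.mpr hne
    have hp := hprod b hb le_rfl
    have hsbn := hs0 b hb le_rfl
    have e2 : 2 * lam * s b * (V 1 * V b) + V 1 * V 1 = 0 := by
      linear_combination V 1 * hfin.symm
    have hpos : 0 ≤ 2 * lam * s b * (V 1 * V b) :=
      mul_nonneg (mul_nonneg (by linarith) hsbn) (le_trans hq.le hp)
    linarith
  -- all V k = 0, hence v = 0
  have hall : ∀ k, 1 ≤ k → k ≤ b → V k = 0 := by
    intro k hk
    induction k, hk using Nat.le_induction with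
    | base => intro _; exact hV1
    | succ n hn ih =>
      intro hnb
      rw [hC n hn (by omega), ih (by omega), hV1]; ring
  apply hv
  funext i
  have := hall (i.val + 1) (by omega) (by have := i.isLt; omega)
  rw [hVi i] at this
  exact this
end

section
/- Let $\lambda \in (0,1]$, $b \ge 1$, and let $s^* \in \mathbb{R}^b$ with $s^*_0 := 1$, $s^*_{b+1} := 0$ satisfy the equilibrium equations $\lambda((s^*_{k-1})^2 - (s^*_k)^2) = s^*_k - s^*_{k+1}$ for $1 \le k \le b-1$ and $\lambda((s^*_{b-1})^2 - (s^*_b)^2) = s^*_b$, with $1 \ge s^*_1 \ge \cdots \ge s^*_b \ge 0$. Then for every $1 \le k \le b$, $s^*_k \le \lambda^{2^k - 1}$. -/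
/-- At the Po2 mean-field equilibrium, `s*_k ≤ λ^(2^k - 1)`. -/
theorem stmt4 (lam : ℝ) (hlam0 : 0 < lam) (hlam1 : lam ≤ 1)
    (b : ℕ) (hb : 1 ≤ b) (s : ℕ → ℝ)
    (h0 : s 0 = 1) (hend : s (b + 1) = 0)
    (heq : ∀ k, 1 ≤ k → k ≤ b - 1 →
      lam * ((s (k - 1)) ^ 2 - (s k) ^ 2) = s k - s (k + 1))
    (heqb : lam * ((s (b - 1)) ^ 2 - (s b) ^ 2) = s b)
    (hs1 : s 1 ≤ 1) (hsb : 0 ≤ s b)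
    (hmono : ∀ k, 1 ≤ k → k < b → s (k + 1) ≤ s k) :
    ∀ k, 1 ≤ k → k ≤ b → s k ≤ lam ^ (2 ^ k - 1) := by
  -- nonnegativity: s k ≥ s b ≥ 0 for 1 ≤ k ≤ b
  have hnn : ∀ j, 1 ≤ j → j ≤ b → s b ≤ s j := by
    intro j hj1 hjb
    have : ∀ d, d ≤ b - 1 → s b ≤ s (b - d) := by
      intro d
      induction d with
      | zero => intro _; simp
      | succ n ih =>
        intro hd
        have h1 : 1 ≤ b - (n + 1) := by omega
        have h2 : b - (n + 1) < b := by omega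
        have := hmono (b - (n + 1)) h1 h2
        have he : b - (n + 1) + 1 = b - n := by omega
        rw [he] at this
        exact le_trans (ih (by omega)) this
    have := this (b - j) (by omega)
    have he : b - (b - j) = j := by omega
    rwa [he] at this
  -- key identity: s k = lam * (s(k-1)^2 - s b ^2)
  have key : ∀ k, 1 ≤ k → k ≤ b → s k = lam * ((s (k - 1)) ^ 2 - (s b) ^ 2) := by
    intro k hk1 hkb
    have main : ∀ d, d ≤ b - 1 → s (b - d) = lam * ((s (b - d - 1)) ^ 2 - (s b) ^ 2) := by
      intro d
      induction d with
      | zero =>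
        intro _
        simpa using heqb.symm
      | succ n ih =>
        intro hd
        have h1 : 1 ≤ b - (n + 1) := by omega
        have h2 : b - (n + 1) ≤ b - 1 := by omega
        have hcur := heq (b - (n + 1)) h1 h2
        have he : b - (n + 1) + 1 = b - n := by omega
        rw [he] at hcur
        have hprev := ih (by omega)
        have : s (b - (n + 1)) = lam * ((s (b - (n + 1) - 1)) ^ 2 - (s (b - (n + 1))) ^ 2)
            + s (b - n) := by linarith
        rw [hprev] at this
        have he2 : b - n - 1 = b - (n + 1) := by omega
        rw [he2] at this
        rw [this]; ring
    have := main (b - k) (by omega)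
    have he : b - (b - k) = k := by omega
    rwa [he] at this
  -- main bound by induction from 1
  intro k hk1 hkb
  induction k, hk1 using Nat.le_induction with
  | base =>
    have h1 := key 1 le_rfl hkb
    simp only [Nat.sub_self] at h1
    rw [h0] at h1
    have hsb2 : 0 ≤ (s b) ^ 2 := sq_nonneg _
    have : s 1 ≤ lam := by nlinarith
    simpa using this
  | succ n hn ih =>
    have hnb : n ≤ b := by omega
    have ihn := ih hnb
    have hk := key (n + 1) (by omega) hkb
    simp only [Nat.add_sub_cancel] at hk
    have hsn0 : 0 ≤ s n := by
      rcases Nat.eq_or_lt_of_le hn with h | h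
      · exact le_trans hsb (hnn n hn hnb)
      · exact le_trans hsb (hnn n hn hnb)
    have hsq : (s n) ^ 2 ≤ (lam ^ (2 ^ n - 1)) ^ 2 := by
      apply pow_le_pow_left₀ hsn0 ihn
    have hsb2 : 0 ≤ (s b) ^ 2 := sq_nonneg _
    have hstep : s (n + 1) ≤ lam * (lam ^ (2 ^ n - 1)) ^ 2 := by
      rw [hk]
      have : lam * ((s n) ^ 2 - (s b) ^ 2) ≤ lam * (s n) ^ 2 := by nlinarith
      have h2 : lam * (s n) ^ 2 ≤ lam * (lam ^ (2 ^ n - 1)) ^ 2 := by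
        apply mul_le_mul_of_nonneg_left hsq (le_of_lt hlam0)
      linarith
    have hexp : lam * (lam ^ (2 ^ n - 1)) ^ 2 = lam ^ (2 ^ (n + 1) - 1) := by
      rw [← pow_mul, ← pow_succ']
      congr 1
      have : 1 ≤ 2 ^ n := Nat.one_le_two_pow
      omega
    rw [hexp] at hstep
    exact hstep
end

section
/- Let $b \ge 1$ and consider the linear ODE system on $\mathbb{R}^b$: $\dot{x}_k = 2\lambda a_{k-1}(t) x_{k-1} - 2\lambda a_k(t) x_k - x_k + x_{k+1}$ for $1 \le k \le b$, with conventions $x_0 \equiv 0$, $x_{b+1} \equiv 0$, where $\lambda > 0$ and $a_k(t) \ge 0$ for all $k, t$. Then $V_1(t) = \sum_{k=1}^b |x_k(t)|$ is non-increasing along every solution; in particular $|x(t)|_1 \le |x(0)|_1$ for all $t \ge 0$. -/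
open Filter Finset Topology

/-!
Where `x_k ≠ 0`, `|x_k|` is differentiable; where `x_k = 0` it still has right derivative
`|ẋ_k|`. Either way that right derivative is `s_k ẋ_k` with `|s_k| ≤ 1` and `s_k x_k = |x_k|`.
Multiplying the `k`-th equation by `s_k` and bounding `s_k x_{k±1} ≤ |x_{k±1}|`, the right
derivative of `V₁` telescopes to at most `-2λ a_b |x_b| - |x_1| ≤ 0`, and a continuous function
with nonpositive right derivative is antitone.
-/

lemma sum_Icc_one_sub_pred {M : Type*} [AddCommGroup M] (f : ℕ → M) (b : ℕ) :
    ∑ k ∈ Icc 1 b, (f k - f (k - 1)) = f b - f 0 := by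
  induction b with
  | zero => simp
  | succ b ih => rw [sum_Icc_succ_top (by omega), ih, Nat.add_sub_cancel]; abel

lemma mul_le_abs_of_abs_le_one {s : ℝ} (hs : |s| ≤ 1) (y : ℝ) : s * y ≤ |y| :=
  (le_abs_self _).trans (by rw [abs_mul]; exact mul_le_of_le_one_left (abs_nonneg y) hs)

lemma sum_subgradient_mul_drift_le {b : ℕ} {c X s : ℕ → ℝ} (hc : ∀ k, 0 ≤ c k)
    (hX0 : X 0 = 0) (hXb : X (b + 1) = 0)
    (hs : ∀ k ∈ Icc 1 b, |s k| ≤ 1) (hsX : ∀ k ∈ Icc 1 b, s k * X k = |X k|) :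
    ∑ k ∈ Icc 1 b, s k * (c (k - 1) * X (k - 1) - c k * X k - X k + X (k + 1))
      ≤ -(c b * |X b|) - |X 1| := by
  set H : ℕ → ℝ := fun k => |X (k + 1)| - c k * |X k|
  have hterm : ∀ k ∈ Icc 1 b,
      s k * (c (k - 1) * X (k - 1) - c k * X k - X k + X (k + 1)) ≤ H k - H (k - 1) := by
    intro k hk
    have hk1 : k - 1 + 1 = k := Nat.sub_add_cancel (mem_Icc.1 hk).1
    calc s k * (c (k - 1) * X (k - 1) - c k * X k - X k + X (k + 1))
        = c (k - 1) * (s k * X (k - 1)) - (c k + 1) * (s k * X k) + s k * X (k + 1) := by ring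
      _ ≤ c (k - 1) * |X (k - 1)| - (c k + 1) * |X k| + |X (k + 1)| := by
        rw [hsX k hk]
        gcongr
        · exact hc _
        · exact mul_le_abs_of_abs_le_one (hs k hk) _
        · exact mul_le_abs_of_abs_le_one (hs k hk) _
      _ = H k - H (k - 1) := by simp only [H, hk1]; ring
  calc _ ≤ ∑ k ∈ Icc 1 b, (H k - H (k - 1)) := sum_le_sum hterm
    _ = -(c b * |X b|) - |X 1| := by rw [sum_Icc_one_sub_pred]; simp [H, hX0, hXb]

lemma HasDerivAt.exists_hasDerivWithinAt_abs_Ici {g : ℝ → ℝ} {d τ : ℝ}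
    (hg : HasDerivAt g d τ) :
    ∃ s : ℝ, |s| ≤ 1 ∧ s * g τ = |g τ| ∧
      HasDerivWithinAt (fun u => |g u|) (s * d) (Set.Ici τ) τ := by
  rcases lt_trichotomy (g τ) 0 with hneg | hzero | hpos
  · refine ⟨-1, by norm_num, by rw [abs_of_neg hneg]; ring, ?_⟩
    exact ((hasDerivAt_abs_neg hneg).comp τ hg).hasDerivWithinAt
  · refine ⟨SignType.sign d, ?_, by simp [hzero], ?_⟩
    · rcases lt_trichotomy d 0 with h | h | h <;> simp [h]
    rw [sign_mul_self, ← hasDerivWithinAt_Ioi_iff_Ici,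
      hasDerivWithinAt_iff_tendsto_slope' Set.self_notMem_Ioi]
    have hslope : Tendsto (slope g τ) (𝓝[>] τ) (𝓝 d) :=
      (hasDerivAt_iff_tendsto_slope.1 hg).mono_left (nhdsWithin_mono τ fun z hz => ne_of_gt hz)
    refine hslope.abs.congr' ?_
    filter_upwards [self_mem_nhdsWithin] with z hz
    rw [slope_def_field, slope_def_field, hzero, abs_zero, sub_zero, sub_zero, abs_div,
      abs_of_pos (sub_pos.2 hz)]
  · refine ⟨1, by norm_num, by rw [abs_of_pos hpos]; ring, ?_⟩
    exact ((hasDerivAt_abs_pos hpos).comp τ hg).hasDerivWithinAt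

lemma antitone_of_hasDerivWithinAt_Ici_nonpos {f : ℝ → ℝ} (hf : Continuous f)
    (hf' : ∀ x, ∃ f', HasDerivWithinAt f f' (Set.Ici x) x ∧ f' ≤ 0) : Antitone f := by
  intro u t hut
  choose f' hderiv hnonpos using hf'
  exact image_le_of_deriv_right_le_deriv_boundary (B := fun _ => f u) hf.continuousOn
    (fun x _ => hderiv x) le_rfl continuousOn_const (fun x _ => hasDerivWithinAt_const x _ (f u))
    (fun x _ => hnonpos x)
    ⟨hut, le_rfl⟩

theorem stmt11_general (b : ℕ) (lam : ℝ) (hlam : 0 < lam)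
    (a : ℝ → ℕ → ℝ) (ha : ∀ t k, 0 ≤ a t k)
    (x : ℝ → ℕ → ℝ) (hx0 : ∀ t, x t 0 = 0) (hxb : ∀ t, x t (b + 1) = 0)
    (hode : ∀ t, ∀ k, 1 ≤ k → k ≤ b →
      HasDerivAt (fun u => x u k)
        (2 * lam * a t (k - 1) * x t (k - 1) - 2 * lam * a t k * x t k
          - x t k + x t (k + 1)) t) :
    AntitoneOn (fun t => ∑ k ∈ Finset.Icc 1 b, |x t k|) (Set.Ici (0 : ℝ)) ∧
    ∀ t, 0 ≤ t →
      ∑ k ∈ Finset.Icc 1 b, |x t k| ≤ ∑ k ∈ Finset.Icc 1 b, |x 0 k| := by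
  have hode' : ∀ t, ∀ k ∈ Icc 1 b, HasDerivAt (fun u => x u k) _ t :=
    fun t k hk => hode t k (mem_Icc.1 hk).1 (mem_Icc.1 hk).2
  have hcont : Continuous fun t => ∑ k ∈ Icc 1 b, |x t k| :=
    continuous_finsetSum _ fun k hk =>
      (continuous_iff_continuousAt.2 fun t => (hode' t k hk).continuousAt).abs
  have hanti : Antitone fun t => ∑ k ∈ Icc 1 b, |x t k| := by
    refine antitone_of_hasDerivWithinAt_Ici_nonpos hcont fun τ => ?_
    choose! s hs hsx hderiv using fun k hk => (hode' τ k hk).exists_hasDerivWithinAt_abs_Ici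
    have hc : ∀ k, 0 ≤ 2 * lam * a τ k := fun k => mul_nonneg (by positivity) (ha τ k)
    refine ⟨_, HasDerivWithinAt.fun_sum hderiv, ?_⟩
    refine (sum_subgradient_mul_drift_le hc (hx0 τ) (hxb τ) hs hsx).trans ?_
    linarith [mul_nonneg (hc b) (abs_nonneg (x τ b)), abs_nonneg (x τ 1)]
  exact ⟨hanti.antitoneOn _, fun t ht => hanti ht⟩

/-- The `ℓ¹` norm is non-increasing along the first-order (variational) system. -/
theorem stmt11 (b : ℕ) (hb : 1 ≤ b) (lam : ℝ) (hlam : 0 < lam)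
    (a : ℝ → ℕ → ℝ) (ha : ∀ t k, 0 ≤ a t k)
    (x : ℝ → ℕ → ℝ) (hx0 : ∀ t, x t 0 = 0) (hxb : ∀ t, x t (b + 1) = 0)
    (hode : ∀ t, ∀ k, 1 ≤ k → k ≤ b →
      HasDerivAt (fun u => x u k)
        (2 * lam * a t (k - 1) * x t (k - 1) - 2 * lam * a t k * x t k
          - x t k + x t (k + 1)) t) :
    AntitoneOn (fun t => ∑ k ∈ Finset.Icc 1 b, |x t k|) (Set.Ici (0 : ℝ)) ∧
    ∀ t, 0 ≤ t →
      ∑ k ∈ Finset.Icc 1 b, |x t k| ≤ ∑ k ∈ Finset.Icc 1 b, |x 0 k| :=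
  stmt11_general b lam hlam a ha x hx0 hxb hode
end

section
/- Let $G_n$ be an $n \times n$ tridiagonal matrix as above with all leading principal minors $P_k$ nonzero, and define the backward convergents $C_k = P_k / P_{k-1}$ for $1 \le k \le n$. Then the $(i,i)$ diagonal entry of the inverse satisfies $[G_n^{-1}]_{ii} = \frac{1}{C_i} + \sum_{k=i+1}^{n}\left(\frac{1}{C_k}\prod_{t=i}^{k-1}\frac{y_t z_t}{C_t^2}\right)$. -/
/-!
By the cofactor formula, the `r`-th diagonal entry of `G_n⁻¹` is `P_(r-1) Q_r / P_n`, where `Q_r` is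
the trailing principal minor on rows `r + 1, …, n`: deleting row and column `r` leaves a
block-diagonal matrix. Expanding `det G_n` across the cut between rows `r` and `r + 1` gives
`P_n = P_r Q_r - y_r z_r P_(r-1) Q_(r+1)`, which turns into the recursion
`[G_n⁻¹]_rr = 1 / C_r + (y_r z_r / C_r²) [G_n⁻¹]_(r+1,r+1)`. Unrolling it from
`[G_n⁻¹]_nn = P_(n-1) / P_n = 1 / C_n` gives the formula.
-/

open Matrix Finset

theorem eq_add_sum_prod_of_recurrence {K : Type*} [CommSemiring K] {a c w : ℕ → K} {r n : ℕ}
    (hrn : r ≤ n) (hn : a n = c n) (hrec : ∀ s, r ≤ s → s < n → a s = c s + w s * a (s + 1)) :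
    a r = c r + ∑ k ∈ Icc (r + 1) n, c k * ∏ t ∈ Icc r (k - 1), w t := by
  induction h : n - r generalizing r with
  | zero =>
    obtain rfl : r = n := by omega
    simp [hn]
  | succ d ih =>
    have hr : r + 1 ≤ n := by omega
    have hprod : ∀ k ∈ Icc (r + 1 + 1) n,
        c k * ∏ t ∈ Icc r (k - 1), w t = w r * (c k * ∏ t ∈ Icc (r + 1) (k - 1), w t) :=
      fun k hk => by
        rw [← insert_Icc_add_one_left_eq_Icc (a := r) (b := k - 1) (by grind),
          prod_insert (by simp)]
        ring
    rw [hrec r le_rfl hr, ih hr (fun s hs => hrec s (by omega)) (by omega),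
      ← insert_Icc_add_one_left_eq_Icc (a := r + 1) (b := n) hr, sum_insert (by simp),
      sum_congr rfl hprod, add_tsub_cancel_right, Icc_self, prod_singleton, mul_add, mul_sum,
      mul_comm (c (r + 1))]

theorem Matrix.det_eq_mul_det_submatrix_castSucc {R : Type*} [CommRing R] {m : ℕ}
    (M : Matrix (Fin (m + 1)) (Fin (m + 1)) R) (h : ∀ i : Fin m, M i.castSucc (Fin.last m) = 0) :
    M.det = M (Fin.last m) (Fin.last m) * (M.submatrix Fin.castSucc Fin.castSucc).det := by
  rw [det_succ_column M (Fin.last m), Fin.sum_univ_castSucc]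
  simp [h, Fin.succAbove_last]

theorem Matrix.inv_apply_self_eq_det_submatrix_div_det {K : Type*} [Field K] {m : ℕ}
    (A : Matrix (Fin (m + 1)) (Fin (m + 1)) K) (i : Fin (m + 1)) :
    A⁻¹ i i = (A.submatrix i.succAbove i.succAbove).det / A.det := by
  rw [Matrix.inv_def, Matrix.smul_apply, smul_eq_mul, Ring.inverse_eq_inv',
    adjugate_fin_succ_eq_det_submatrix, Even.neg_one_pow ⟨i, rfl⟩, one_mul, div_eq_inv_mul]

section Tridiag

variable {R : Type*} [CommRing R] (x y z : ℕ → R)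

/-- The `m × m` diagonal block, starting after row `j`, of the tridiagonal matrix with diagonal
`x 1, x 2, …`, superdiagonal `y 1, y 2, …` and subdiagonal `z 1, z 2, …`. Thus `tridiag x y z 0 n`
is the paper's `G_n`, the `tridiag x y z 0 k` are its leading blocks (determinant `P_k`) and the
`tridiag x y z j (n - j)` its trailing ones. -/
def tridiag (j m : ℕ) : Matrix (Fin m) (Fin m) R :=
  Matrix.of fun a b =>
    if (a : ℕ) = b then x (j + a + 1)
    else if (b : ℕ) = a + 1 then y (j + a + 1)
    else if (a : ℕ) = b + 1 then z (j + b + 1)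
    else 0

theorem tridiag_apply_eq_zero {j m : ℕ} {a b : Fin m} (h : (a : ℕ) + 1 < b ∨ (b : ℕ) + 1 < a) :
    tridiag x y z j m a b = 0 := by
  rw [tridiag, of_apply, if_neg (by omega), if_neg (by omega), if_neg (by omega)]

theorem tridiag_submatrix_castSucc (j m : ℕ) :
    (tridiag x y z j (m + 1)).submatrix Fin.castSucc Fin.castSucc = tridiag x y z j m := by
  ext a b
  simp [tridiag]

theorem det_tridiag_add_two (j m : ℕ) :
    (tridiag x y z j (m + 2)).det =
      x (j + m + 2) * (tridiag x y z j (m + 1)).det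
        - y (j + m + 1) * z (j + m + 1) * (tridiag x y z j m).det := by
  set T := tridiag x y z j (m + 2)
  have hminor : (T.submatrix (Fin.last (m + 1)).succAbove (Fin.last m).castSucc.succAbove).det =
      y (j + m + 1) * (tridiag x y z j m).det := by
    rw [det_eq_mul_det_submatrix_castSucc]
    · congr 1
      · simp [T, tridiag]
      · congr 1
        ext a b
        simp [T, tridiag, Fin.succAbove_of_castSucc_lt, Fin.castSucc_lt_last]
    · intro i
      exact tridiag_apply_eq_zero x y z (by simp)
  have hdiag : T (Fin.last (m + 1)) (Fin.last (m + 1)) = x (j + m + 2) := by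
    simp [T, tridiag, add_assoc]
  have hsub : T (Fin.last (m + 1)) (Fin.last m).castSucc = z (j + m + 1) := by
    simp [T, tridiag, show m ≠ m + 2 by omega]
  have hfar (k : Fin m) : T (Fin.last (m + 1)) k.castSucc.castSucc = 0 :=
    tridiag_apply_eq_zero x y z (by simp)
  have hodd : (-1 : R) ^ (m + 1 + m) = -1 := Odd.neg_one_pow ⟨m, by ring⟩
  have heven : (-1 : R) ^ (m + 1 + (m + 1)) = 1 := Even.neg_one_pow ⟨m + 1, rfl⟩
  rw [det_succ_row _ (Fin.last (m + 1)), Fin.sum_univ_castSucc, Fin.sum_univ_castSucc, hminor,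
    Fin.succAbove_last, tridiag_submatrix_castSucc]
  simp only [hdiag, hsub, hfar, Fin.val_last, Fin.val_castSucc, hodd, heven, mul_zero, zero_mul,
    sum_const_zero, zero_add]
  ring

theorem det_tridiag_one (j : ℕ) : (tridiag x y z j 1).det = x (j + 1) := by
  simp [tridiag]

/-- Both sides satisfy, in `s`, the three-term recurrence `det_tridiag_add_two`. -/
theorem det_tridiag_split (j i s : ℕ) :
    (tridiag x y z j (i + s + 2)).det =
      (tridiag x y z j (i + 1)).det * (tridiag x y z (j + i + 1) (s + 1)).det
        - y (j + i + 1) * z (j + i + 1) * (tridiag x y z j i).det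
          * (tridiag x y z (j + i + 2) s).det := by
  induction s using Nat.twoStepInduction with
  | zero =>
    rw [det_tridiag_add_two, det_tridiag_one, det_fin_zero]
    ring
  | one =>
    rw [det_tridiag_add_two, show i + 1 + 1 = i + 2 from rfl, det_tridiag_add_two,
      det_tridiag_add_two, det_tridiag_one, det_tridiag_one, det_fin_zero]
    ring_nf
  | more s ih₀ ih₁ =>
    rw [show i + (s + 2) + 2 = i + s + 2 + 2 from rfl, det_tridiag_add_two,
      show i + s + 2 + 1 = i + (s + 1) + 2 from rfl, ih₁, ih₀,
      det_tridiag_add_two _ _ _ (j + i + 1) (s + 1), det_tridiag_add_two _ _ _ (j + i + 2) s]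
    ring_nf

theorem det_tridiag_submatrix_succAbove (j m : ℕ) (i : Fin (m + 1)) :
    ((tridiag x y z j (m + 1)).submatrix i.succAbove i.succAbove).det =
      (tridiag x y z j i).det * (tridiag x y z (j + i + 1) (m - i)).det := by
  have hm : (i : ℕ) + (m - i) = m := by omega
  let e : Fin i ⊕ Fin (m - i) ≃ Fin m := finSumFinEquiv.trans (finCongr hm)
  have hleft (a : Fin i) : (i.succAbove (e (.inl a)) : ℕ) = a := by
    rw [Fin.succAbove_of_castSucc_lt _ _ (by simp [e, Fin.lt_def])]
    simp [e]
  have hright (a : Fin (m - i)) : (i.succAbove (e (.inr a)) : ℕ) = i + a + 1 := by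
    rw [Fin.succAbove_of_le_castSucc _ _ (by simp [e, Fin.le_def])]
    simp [e]
  rw [← det_submatrix_equiv_self e, ← det_fromBlocks_zero₂₁ _ (0 : Matrix _ _ R)]
  congr 1
  ext (a | a) (b | b)
  · simp [tridiag, hleft]
  · exact tridiag_apply_eq_zero x y z (by rw [hleft, hright]; omega)
  · exact tridiag_apply_eq_zero x y z (by rw [hleft, hright]; omega)
  · simp [tridiag, hright, add_assoc, add_comm 1]

end Tridiag

section Field

variable {K : Type*} [Field K] (x y z : ℕ → K)

/-- The recursion `a_r = 1 / C_r + (y_r z_r / C_r²) a_(r+1)` for `r = i + 1`, where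
`C_r = P_r / P_(r-1)` and `a_r = P_(r-1) Q_r / P_n` is the `r`-th diagonal entry of the inverse. -/
theorem det_tridiag_split_div (i s : ℕ) (h₀ : (tridiag x y z 0 i).det ≠ 0)
    (h₁ : (tridiag x y z 0 (i + 1)).det ≠ 0) (h₂ : (tridiag x y z 0 (i + s + 2)).det ≠ 0) :
    (tridiag x y z 0 i).det * (tridiag x y z (i + 1) (s + 1)).det
        / (tridiag x y z 0 (i + s + 2)).det =
      1 / ((tridiag x y z 0 (i + 1)).det / (tridiag x y z 0 i).det)
        + y (i + 1) * z (i + 1) / ((tridiag x y z 0 (i + 1)).det / (tridiag x y z 0 i).det) ^ 2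
          * ((tridiag x y z 0 (i + 1)).det * (tridiag x y z (i + 2) s).det
            / (tridiag x y z 0 (i + s + 2)).det) := by
  have hsplit := det_tridiag_split x y z 0 i s
  simp only [zero_add] at hsplit
  field_simp
  rw [hsplit]
  ring

end Field

theorem stmt14_general (n : ℕ) (x y z : ℕ → ℝ)
    (G : Matrix (Fin n) (Fin n) ℝ)
    (hG : ∀ i j : Fin n, G i j =
      if (i : ℕ) = (j : ℕ) then x (i.val + 1)
      else if (j : ℕ) = i.val + 1 then y (i.val + 1)
      else if (i : ℕ) = j.val + 1 then z (j.val + 1)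
      else 0)
    (P : ℕ → ℝ)
    (hP : ∀ (k : ℕ) (hk : k ≤ n), P k =
      Matrix.det (fun i j : Fin k =>
        G ⟨i.val, lt_of_lt_of_le i.isLt hk⟩ ⟨j.val, lt_of_lt_of_le j.isLt hk⟩))
    (hPne : ∀ k, k ≤ n → P k ≠ 0)
    (Cc : ℕ → ℝ) (hC : ∀ k, 1 ≤ k → k ≤ n → Cc k = P k / P (k - 1)) :
    ∀ i : Fin n, G⁻¹ i i =
      1 / Cc (i.val + 1) +
        ∑ k ∈ Finset.Icc (i.val + 2) n,
          (1 / Cc k) * ∏ t ∈ Finset.Icc (i.val + 1) (k - 1),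
            (y t * z t) / (Cc t) ^ 2 := by
  intro i
  obtain ⟨m, rfl⟩ := Nat.exists_eq_add_one.mpr i.pos
  have hGt : G = tridiag x y z 0 (m + 1) := by
    ext a b
    simp [hG, tridiag]
  have hPt (k : ℕ) (hk : k ≤ m + 1) : P k = (tridiag x y z 0 k).det := by
    rw [hP k hk, hGt]
    rfl
  have hD (k : ℕ) (hk : k ≤ m + 1) : (tridiag x y z 0 k).det ≠ 0 := hPt k hk ▸ hPne k hk
  have hCt (k : ℕ) (hk₁ : 1 ≤ k) (hk₂ : k ≤ m + 1) :
      Cc k = (tridiag x y z 0 k).det / (tridiag x y z 0 (k - 1)).det := by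
    rw [hC k hk₁ hk₂, hPt k hk₂, hPt (k - 1) (by omega)]
  set a : ℕ → ℝ := fun r => (tridiag x y z 0 (r - 1)).det * (tridiag x y z r (m + 1 - r)).det
    / (tridiag x y z 0 (m + 1)).det
  have hentry : G⁻¹ i i = a (i + 1) := by
    rw [hGt, inv_apply_self_eq_det_submatrix_div_det, det_tridiag_submatrix_succAbove]
    simp only [a, zero_add]
    rw [Nat.add_sub_cancel, Nat.add_sub_add_right]
  rw [hentry]
  refine eq_add_sum_prod_of_recurrence (c := fun k => 1 / Cc k)
    (w := fun t => y t * z t / Cc t ^ 2) (by omega) ?_ ?_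
  · simp only [a, hCt (m + 1) (by omega) le_rfl]
    rw [Nat.sub_self, det_fin_zero, mul_one, one_div_div]
  · intro s hs hsm
    obtain ⟨t, rfl⟩ : ∃ t, s = t + 1 := ⟨s - 1, by omega⟩
    obtain ⟨u, rfl⟩ : ∃ u, m = t + u + 1 := ⟨m - t - 1, by omega⟩
    simp only [a, hCt (t + 1) (by omega) (by omega)]
    rw [Nat.add_sub_cancel, Nat.add_sub_cancel, show t + u + 1 + 1 - (t + 1) = u + 1 by omega,
      show t + u + 1 + 1 - (t + 1 + 1) = u by omega]
    exact det_tridiag_split_div x y z t u (hD t (by omega)) (hD (t + 1) (by omega))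
      (hD (t + u + 2) (by omega))

/-- Kiliç's continued-fraction formula for the diagonal of the inverse of a
tridiagonal matrix. -/
theorem stmt14 (n : ℕ) (hn : 1 ≤ n) (x y z : ℕ → ℝ)
    (G : Matrix (Fin n) (Fin n) ℝ)
    (hG : ∀ i j : Fin n, G i j =
      if (i : ℕ) = (j : ℕ) then x (i.val + 1)
      else if (j : ℕ) = i.val + 1 then y (i.val + 1)
      else if (i : ℕ) = j.val + 1 then z (j.val + 1)
      else 0)
    (P : ℕ → ℝ)
    (hP : ∀ (k : ℕ) (hk : k ≤ n), P k =
      Matrix.det (fun i j : Fin k =>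
        G ⟨i.val, lt_of_lt_of_le i.isLt hk⟩ ⟨j.val, lt_of_lt_of_le j.isLt hk⟩))
    (hPne : ∀ k, k ≤ n → P k ≠ 0)
    (Cc : ℕ → ℝ) (hC : ∀ k, 1 ≤ k → k ≤ n → Cc k = P k / P (k - 1)) :
    ∀ i : Fin n, G⁻¹ i i =
      1 / Cc (i.val + 1) +
        ∑ k ∈ Finset.Icc (i.val + 2) n,
          (1 / Cc k) * ∏ t ∈ Finset.Icc (i.val + 1) (k - 1),
            (y t * z t) / (Cc t) ^ 2 :=
  stmt14_general n x y z G hG P hP hPne Cc hC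
end

section
/- Let $\lambda > 0$, $b \ge 1$, and $s^* \in \mathbb{R}^b$ with $0 \le s^*_k$ for all $k$ and $s^*_1 \le 1$. Let $J = J(s^*)$ be the tridiagonal Jacobian with diagonal $-2\lambda s^*_k - 1$, superdiagonal $1$, subdiagonal $2\lambda s^*_k$. Then every diagonal entry of $J^{-1}$ is negative: $[J^{-1}]_{ii} < 0$ for all $i = 1, \dots, b$. Moreover, if $\lambda \le 1$, then $|[J^{-1}]_{11}| \ge \frac{1}{2\lambda s^*_1 + 1} \ge \frac{1}{3}$. -/
open Matrix

/-- determinant of the tridiagonal block on indices `l+1,…,l+n`. -/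
noncomputable def dd (a : ℕ → ℝ) : ℕ → ℕ → ℝ
  | _, 0 => 1
  | l, 1 => -(a (l+1) + 1)
  | l, (n+2) => -(a (l+1) + 1) * dd a (l+1) (n+1) - a (l+1) * dd a (l+2) n

lemma dd_zero (a : ℕ → ℝ) (l : ℕ) : dd a l 0 = 1 := rfl
lemma dd_one (a : ℕ → ℝ) (l : ℕ) : dd a l 1 = -(a (l+1) + 1) := rfl
lemma dd_two (a : ℕ → ℝ) (l n : ℕ) :
    dd a l (n+2) = -(a (l+1) + 1) * dd a (l+1) (n+1) - a (l+1) * dd a (l+2) n := rfl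

lemma dd_key (a : ℕ → ℝ) (ha : ∀ k, 0 ≤ a k) :
    ∀ n, (∀ l, 1 ≤ (-1:ℝ)^n * dd a l n) ∧
         (∀ l, (-1:ℝ)^n * dd a (l+1) n ≤ (-1:ℝ)^(n+1) * dd a l (n+1)) := by
  intro n
  induction n with
  | zero =>
    refine ⟨fun l => by simp [dd_zero], fun l => ?_⟩
    show (-1:ℝ)^0 * dd a (l+1) 0 ≤ (-1:ℝ)^(0+1) * dd a l (0+1)
    norm_num [dd_zero, dd_one]
    nlinarith [ha (l+1)]
  | succ n ih =>
    refine ⟨fun l => le_trans (ih.1 (l+1)) (ih.2 l), fun l => ?_⟩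
    have hp1 : (-1:ℝ)^(n+1) = (-1:ℝ)^n * (-1) := by rw [pow_succ]
    have hp2 : (-1:ℝ)^(n+2) = (-1:ℝ)^n := by rw [pow_succ, pow_succ]; ring
    rw [dd_two, hp2, hp1]
    have h1 := ih.2 (l+1)
    have h2 := ih.1 (l+2)
    rw [hp1] at h1
    nlinarith [ha (l+1)]

lemma dd_pos (a : ℕ → ℝ) (ha : ∀ k, 0 ≤ a k) (l n : ℕ) : 0 < (-1:ℝ)^n * dd a l n :=
  lt_of_lt_of_le one_pos ((dd_key a ha n).1 l)

lemma dd_ne_zero (a : ℕ → ℝ) (ha : ∀ k, 0 ≤ a k) (l n : ℕ) : dd a l n ≠ 0 := by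
  intro h
  have := dd_pos a ha l n
  rw [h] at this; simp at this

/-- the tridiagonal matrix on indices `l+1,…,l+n`. -/
noncomputable def T (a : ℕ → ℝ) (l n : ℕ) : Matrix (Fin n) (Fin n) ℝ :=
  Matrix.of fun i j =>
    if (i:ℕ) = (j:ℕ) then -(a (l + i + 1) + 1)
    else if (j:ℕ) = (i:ℕ) + 1 then 1
    else if (i:ℕ) = (j:ℕ) + 1 then a (l + j + 1)
    else 0

lemma T_val (a : ℕ → ℝ) (l n : ℕ) (i j : Fin n) :
    T a l n i j =
      if (i:ℕ) = (j:ℕ) then -(a (l + i + 1) + 1)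
      else if (j:ℕ) = (i:ℕ) + 1 then 1
      else if (i:ℕ) = (j:ℕ) + 1 then a (l + j + 1)
      else 0 := rfl

lemma T_congr (a : ℕ → ℝ) (l : ℕ) {n m : ℕ} (c : ℕ) (i j : Fin n) (p q : Fin m)
    (hi : (i:ℕ) = (p:ℕ) + c) (hj : (j:ℕ) = (q:ℕ) + c) :
    T a l n i j = T a (l + c) m p q := by
  rw [T_val, T_val, hi, hj]
  split_ifs <;>
    first
      | rfl
      | (exfalso; omega)
      | (congr 3 <;> omega)
      | (congr 1 <;> omega)

lemma succAbove_val {n : ℕ} (i : Fin (n+1)) (j : Fin n) :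
    ((i.succAbove j : Fin (n+1)) : ℕ) = if (j:ℕ) < (i:ℕ) then (j:ℕ) else (j:ℕ) + 1 := by
  rcases lt_or_ge ((j:ℕ)) ((i:ℕ)) with h | h
  · rw [if_pos h, Fin.succAbove_of_castSucc_lt _ _ (by simpa [Fin.lt_def] using h)]
    simp
  · rw [if_neg (not_lt.2 h), Fin.succAbove_of_le_castSucc _ _ (by simpa [Fin.le_def] using h)]
    simp

lemma detT (a : ℕ → ℝ) : ∀ n l, (T a l n).det = dd a l n := by
  intro n
  induction n using Nat.strong_induction_on with
  | _ n ih =>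
    match n with
    | 0 => intro l; simp [Matrix.det_fin_zero, dd_zero]
    | 1 => intro l; simp [Matrix.det_fin_one, dd_one, T_val]
    | (n+2) =>
      intro l
      rw [Matrix.det_succ_column_zero, Fin.sum_univ_succ, Fin.sum_univ_succ]
      simp only [Fin.succ_zero_eq_one, Fin.val_zero, Fin.val_one, pow_zero, pow_one]
      have hzero : ∀ i : Fin n,
          ((-1:ℝ)^((i.succ.succ : Fin (n+2)) : ℕ) * T a l (n+2) i.succ.succ 0 *
            ((T a l (n+2)).submatrix (Fin.succAbove i.succ.succ) Fin.succ).det) = 0 := by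
        intro i
        have : T a l (n+2) i.succ.succ 0 = 0 := by
          rw [T_val]
          simp only [Fin.val_succ, Fin.val_zero]
          split_ifs <;> first | rfl | (exfalso; omega) | exact False.elim (by assumption)
        rw [this]; ring
      rw [Finset.sum_eq_zero (fun i _ => hzero i)]
      have h00 : T a l (n+2) 0 0 = -(a (l+1) + 1) := by
        rw [T_val]; simp
      have h10 : T a l (n+2) 1 0 = a (l+1) := by
        rw [T_val]
        simp only [Fin.val_one, Fin.val_zero]
        norm_num
      have hsub0 : (T a l (n+2)).submatrix (Fin.succAbove 0) Fin.succ = T a (l+1) (n+1) := by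
        ext i j
        simp only [Matrix.submatrix_apply, Fin.succAbove_zero]
        exact T_congr a l 1 _ _ i j (by simp) (by simp)
      -- second minor
      have hminor : ((T a l (n+2)).submatrix (Fin.succAbove 1) Fin.succ).det = dd a (l+2) n := by
        rw [Matrix.det_succ_row_zero, Fin.sum_univ_succ]
        have hz : ∀ j : Fin n,
            ((-1:ℝ)^((j.succ : Fin (n+1)) : ℕ) *
              ((T a l (n+2)).submatrix (Fin.succAbove 1) Fin.succ) 0 j.succ *
              (((T a l (n+2)).submatrix (Fin.succAbove 1) Fin.succ).submatrix Fin.succ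
                (Fin.succAbove j.succ)).det) = 0 := by
          intro j
          have : ((T a l (n+2)).submatrix (Fin.succAbove 1) Fin.succ) 0 j.succ = 0 := by
            simp only [Matrix.submatrix_apply]
            have hr : ((Fin.succAbove 1 (0 : Fin (n+1)) : Fin (n+2)) : ℕ) = 0 := by
              rw [succAbove_val]; simp
            rw [T_val, hr]
            simp only [Fin.val_succ]
            split_ifs <;> first | rfl | (exfalso; omega) | exact False.elim (by assumption)
          rw [this]; ring
        rw [Finset.sum_eq_zero (fun j _ => hz j)]
        have he : ((T a l (n+2)).submatrix (Fin.succAbove 1) Fin.succ) 0 0 = 1 := by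
          simp only [Matrix.submatrix_apply]
          have hr : ((Fin.succAbove 1 (0 : Fin (n+1)) : Fin (n+2)) : ℕ) = 0 := by
            rw [succAbove_val]; simp
          rw [T_val, hr]
          simp
        have hsub2 : (((T a l (n+2)).submatrix (Fin.succAbove 1) Fin.succ).submatrix Fin.succ
            (Fin.succAbove 0)) = T a (l+2) n := by
          ext i j
          simp only [Matrix.submatrix_apply, Fin.succAbove_zero]
          have hr : ((Fin.succAbove 1 (i.succ) : Fin (n+2)) : ℕ) = (i:ℕ) + 2 := by
            rw [succAbove_val]; simp [Fin.val_succ]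
          refine Eq.trans ?_ (T_congr a l 2 (Fin.succAbove 1 i.succ) j.succ.succ i j ?_ ?_)
          · rfl
          · omega
          · simp [Fin.val_succ]
        rw [he, hsub2, ih n (by omega)]
        simp
      rw [h00, h10, hsub0, ih (n+1) (by omega), hminor, dd_two]
      simp [Fin.val_zero, Fin.val_one]
      ring
lemma det_minor (a : ℕ → ℝ) (l n : ℕ) (i : Fin (n+1)) :
    ((T a l (n+1)).submatrix i.succAbove i.succAbove).det
      = dd a l i * dd a (l + i + 1) (n - i) := by
  have hin : (i:ℕ) ≤ n := Fin.is_le i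
  have hsum : (i:ℕ) + (n - (i:ℕ)) = n := by omega
  set M := (T a l (n+1)).submatrix i.succAbove i.succAbove with hM
  let e : Fin ((i:ℕ) + (n - (i:ℕ))) ≃ Fin n := finCongr hsum
  have h1 : M.det = ((M.submatrix e e).submatrix finSumFinEquiv finSumFinEquiv).det := by
    rw [Matrix.det_submatrix_equiv_self, Matrix.det_submatrix_equiv_self]
  have key : ∀ z : Fin ((i:ℕ) + (n - (i:ℕ))),
      ((i.succAbove (e z) : Fin (n+1)) : ℕ) = if (z:ℕ) < (i:ℕ) then (z:ℕ) else (z:ℕ) + 1 := by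
    intro z
    rw [succAbove_val]
    simp [e]
  have h2 : (M.submatrix e e).submatrix finSumFinEquiv finSumFinEquiv
      = Matrix.fromBlocks (T a l (i:ℕ)) 0 0 (T a (l + (i:ℕ) + 1) (n - (i:ℕ))) := by
    ext x y
    cases x with
    | inl p =>
      have hp := key (finSumFinEquiv (Sum.inl p))
      rw [finSumFinEquiv_apply_left, Fin.coe_castAdd, if_pos p.isLt] at hp
      cases y with
      | inl q =>
        have hq := key (finSumFinEquiv (Sum.inl q))
        rw [finSumFinEquiv_apply_left, Fin.coe_castAdd, if_pos q.isLt] at hq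
        simp only [finSumFinEquiv_apply_left, finSumFinEquiv_apply_right, Matrix.submatrix_apply, hM, Matrix.fromBlocks_apply₁₁]
        rw [T_val, T_val, hp, hq]
      | inr q =>
        have hq := key (finSumFinEquiv (Sum.inr q))
        rw [finSumFinEquiv_apply_right, Fin.coe_natAdd, if_neg (by omega)] at hq
        simp only [finSumFinEquiv_apply_left, finSumFinEquiv_apply_right, Matrix.submatrix_apply, hM, Matrix.fromBlocks_apply₁₂, Matrix.zero_apply]
        rw [T_val, hp, hq]
        have hpi : (p:ℕ) < (i:ℕ) := p.isLt
        split_ifs <;> first | rfl | (exfalso; omega) | exact False.elim (by assumption)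
    | inr p =>
      have hp := key (finSumFinEquiv (Sum.inr p))
      rw [finSumFinEquiv_apply_right, Fin.coe_natAdd, if_neg (by omega)] at hp
      cases y with
      | inl q =>
        have hq := key (finSumFinEquiv (Sum.inl q))
        rw [finSumFinEquiv_apply_left, Fin.coe_castAdd, if_pos q.isLt] at hq
        simp only [finSumFinEquiv_apply_left, finSumFinEquiv_apply_right, Matrix.submatrix_apply, hM, Matrix.fromBlocks_apply₂₁, Matrix.zero_apply]
        rw [T_val, hp, hq]
        have hqi : (q:ℕ) < (i:ℕ) := q.isLt
        split_ifs <;> first | rfl | (exfalso; omega) | exact False.elim (by assumption)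
      | inr q =>
        have hq := key (finSumFinEquiv (Sum.inr q))
        rw [finSumFinEquiv_apply_right, Fin.coe_natAdd, if_neg (by omega)] at hq
        simp only [finSumFinEquiv_apply_left, finSumFinEquiv_apply_right, Matrix.submatrix_apply, hM, Matrix.fromBlocks_apply₂₂]
        have hl : l + (i:ℕ) + 1 = l + ((i:ℕ) + 1) := by ring
        rw [hl]
        exact T_congr a l ((i:ℕ)+1) _ _ p q (by omega) (by omega)
  rw [h1, h2, Matrix.det_fromBlocks_zero₂₁, detT, detT]

lemma inv_diag {n : ℕ} (A : Matrix (Fin (n+1)) (Fin (n+1)) ℝ) (i : Fin (n+1)) :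
    A⁻¹ i i = (A.det)⁻¹ * (A.submatrix i.succAbove i.succAbove).det := by
  rw [Matrix.inv_def, Matrix.smul_apply, Matrix.adjugate_apply, smul_eq_mul,
    Ring.inverse_eq_inv]
  congr 1
  rw [Matrix.det_succ_row _ i]
  rw [Finset.sum_eq_single i]
  · have h1 : (A.updateRow i (Pi.single i 1)) i i = 1 := by
      rw [Matrix.updateRow_self, Pi.single_eq_same]
    have h2 : (A.updateRow i (Pi.single i 1)).submatrix i.succAbove i.succAbove
        = A.submatrix i.succAbove i.succAbove := by
      ext p q
      simp only [Matrix.submatrix_apply]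
      rw [Matrix.updateRow_ne (Fin.succAbove_ne i p)]
    have h3 : ((-1:ℝ))^((i:ℕ) + (i:ℕ)) = 1 := Even.neg_one_pow ⟨(i:ℕ), by ring⟩
    rw [h1, h2, h3]
    ring
  · intro j _ hj
    have : (A.updateRow i (Pi.single i 1)) i j = 0 := by
      rw [Matrix.updateRow_self, Pi.single_eq_of_ne hj]
    rw [this]; ring
  · intro h; exact absurd (Finset.mem_univ i) h
lemma sign_helper {d0 d1 d2 : ℝ} {m k : ℕ} (hk : k ≤ m)
    (h0 : 0 < (-1:ℝ)^(m+1) * d0) (h1 : 0 < (-1:ℝ)^k * d1) (h2 : 0 < (-1:ℝ)^(m-k) * d2) :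
    d0⁻¹ * (d1 * d2) < 0 := by
  rcases Nat.even_or_odd k with hek | hek <;> rcases Nat.even_or_odd m with hem | hem
  · -- k even, m even
    rw [Even.neg_one_pow hek, one_mul] at h1
    rw [Even.neg_one_pow ((Nat.even_sub hk).2 (by simp [hem, hek])), one_mul] at h2
    rw [Odd.neg_one_pow (Even.add_one hem)] at h0
    have hd0 : d0 < 0 := by nlinarith
    have : d0⁻¹ < 0 := inv_lt_zero.2 hd0
    exact mul_neg_of_neg_of_pos this (mul_pos h1 h2)
  · -- k even, m odd
    rw [Even.neg_one_pow hek, one_mul] at h1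
    rw [Odd.neg_one_pow (Nat.Odd.sub_even hk hem hek)] at h2
    rw [Even.neg_one_pow (Odd.add_one hem), one_mul] at h0
    have hd2 : d2 < 0 := by nlinarith
    have : 0 < d0⁻¹ := inv_pos.2 h0
    exact mul_neg_of_pos_of_neg this (mul_neg_of_pos_of_neg h1 hd2)
  · -- k odd, m even
    rw [Odd.neg_one_pow hek] at h1
    rw [Odd.neg_one_pow (Nat.Even.sub_odd hk hem hek)] at h2
    rw [Odd.neg_one_pow (Even.add_one hem)] at h0
    have hd0 : d0 < 0 := by nlinarith
    have hd1 : d1 < 0 := by nlinarith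
    have hd2 : d2 < 0 := by nlinarith
    have : d0⁻¹ < 0 := inv_lt_zero.2 hd0
    exact mul_neg_of_neg_of_pos this (mul_pos_of_neg_of_neg hd1 hd2)
  · -- k odd, m odd
    rw [Odd.neg_one_pow hek] at h1
    rw [Even.neg_one_pow (Nat.Odd.sub_odd hem hek), one_mul] at h2
    rw [Even.neg_one_pow (Odd.add_one hem), one_mul] at h0
    have hd1 : d1 < 0 := by nlinarith
    have : 0 < d0⁻¹ := inv_pos.2 h0
    exact mul_neg_of_pos_of_neg this (mul_neg_of_neg_of_pos hd1 h2)

/-- Diagonal entries of the inverse Po2 Jacobian are negative, and the `(1,1)`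
entry has absolute value at least `1/(2λs₁+1) ≥ 1/3`. -/
theorem stmt15 (b : ℕ) (hb : 0 < b) (lam : ℝ) (hlam : 0 < lam)
    (s : ℕ → ℝ) (hs : ∀ k, 1 ≤ k → k ≤ b → 0 ≤ s k) (hs1 : s 1 ≤ 1)
    (J : Matrix (Fin b) (Fin b) ℝ)
    (hJ : ∀ i j : Fin b, J i j =
      if i = j then -2 * lam * s (i.val + 1) - 1
      else if (j : ℕ) = i.val + 1 then 1
      else if (i : ℕ) = j.val + 1 then 2 * lam * s (j.val + 1)
      else 0) :
    (∀ i : Fin b, J⁻¹ i i < 0) ∧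
    (lam ≤ 1 →
      1 / (2 * lam * s 1 + 1) ≤ |J⁻¹ ⟨0, hb⟩ ⟨0, hb⟩| ∧
      (1 : ℝ) / 3 ≤ 1 / (2 * lam * s 1 + 1)) := by
  obtain ⟨m, rfl⟩ : ∃ m, b = m + 1 := ⟨b - 1, by omega⟩
  set a : ℕ → ℝ := fun k => 2 * lam * max (s k) 0 with haDef
  have ha : ∀ k, 0 ≤ a k := by
    intro k
    have h0 : (0:ℝ) ≤ max (s k) 0 := le_max_right _ _
    have : (0:ℝ) ≤ 2 * lam := by linarith
    exact mul_nonneg this h0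
  have hs' : ∀ x : ℕ, x + 1 ≤ m + 1 → a (x+1) = 2 * lam * s (x+1) := by
    intro x hx
    have h0 : 0 ≤ s (x+1) := hs _ (by omega) (by omega)
    simp [haDef, max_eq_left h0]
  have hJT : J = T a 0 (m+1) := by
    ext i j
    rw [hJ, T_val]
    simp only [Nat.zero_add]
    by_cases h1 : (i:ℕ) = (j:ℕ)
    · have hij : i = j := Fin.ext h1
      rw [if_pos hij, if_pos h1, hs' (i:ℕ) (by omega)]
      ring
    · have hne : i ≠ j := fun h => h1 (by rw [h])
      rw [if_neg hne, if_neg h1]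
      by_cases h2 : (j:ℕ) = (i:ℕ)+1
      · rw [if_pos h2, if_pos h2]
      · rw [if_neg h2, if_neg h2]
        by_cases h3 : (i:ℕ) = (j:ℕ)+1
        · rw [if_pos h3, if_pos h3, hs' (j:ℕ) (by omega)]
        · rw [if_neg h3, if_neg h3]
  have hdet : J.det = dd a 0 (m+1) := by rw [hJT, detT]
  have part1 : ∀ i : Fin (m+1), J⁻¹ i i < 0 := by
    intro i
    have hdiag : J⁻¹ i i = (dd a 0 (m+1))⁻¹ * (dd a 0 (i:ℕ) * dd a ((i:ℕ) + 1) (m - (i:ℕ))) := by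
      rw [inv_diag J i, hdet]
      congr 1
      rw [hJT, det_minor]
      norm_num
    rw [hdiag]
    exact sign_helper (Fin.is_le i) (dd_pos a ha 0 (m+1)) (dd_pos a ha 0 (i:ℕ))
      (dd_pos a ha ((i:ℕ)+1) (m - (i:ℕ)))
  refine ⟨part1, fun hlam1 => ?_⟩
  have h00 : J⁻¹ ⟨0, Nat.succ_pos m⟩ ⟨0, Nat.succ_pos m⟩ = (dd a 0 (m+1))⁻¹ * dd a 1 m := by
    rw [inv_diag J ⟨0, Nat.succ_pos m⟩, hdet]
    congr 1
    rw [hJT, det_minor]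
    norm_num [dd_zero]
  have E0pos := dd_pos a ha 0 (m+1)
  have E1pos := dd_pos a ha 1 m
  -- key inequality
  have key : (-1:ℝ)^(m+1) * dd a 0 (m+1) ≤ (a 1 + 1) * ((-1:ℝ)^m * dd a 1 m) := by
    match m with
    | 0 => simp [dd_zero, dd_one]
    | (n+1) =>
      rw [dd_two]
      have hp1 : (-1:ℝ)^(n+1+1) = (-1:ℝ)^n := by rw [pow_succ, pow_succ]; ring
      have hp2 : (-1:ℝ)^(n+1) = (-1:ℝ)^n * (-1) := by rw [pow_succ]
      rw [hp1, hp2]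
      have h2 := dd_pos a ha 2 n
      nlinarith [ha 1]
  -- abs value
  have hneg := part1 ⟨0, Nat.succ_pos m⟩
  have habs : |J⁻¹ ⟨0, Nat.succ_pos m⟩ ⟨0, Nat.succ_pos m⟩|
      = ((-1:ℝ)^m * dd a 1 m) / ((-1:ℝ)^(m+1) * dd a 0 (m+1)) := by
    rw [abs_of_neg hneg, h00]
    rcases neg_one_pow_eq_or ℝ m with hc | hc
    · rw [hc, pow_succ, hc]
      rw [div_eq_mul_inv]
      ring_nf
    · rw [hc, pow_succ, hc]
      rw [div_eq_mul_inv]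
      ring_nf
  have ha1 : a 1 = 2 * lam * s 1 := hs' 0 (by omega)
  have hs1pos : 0 ≤ s 1 := hs 1 (by omega) (by omega)
  have hden : (0:ℝ) < 2 * lam * s 1 + 1 := by nlinarith
  constructor
  · rw [habs]
    rw [div_le_div_iff₀ hden E0pos]
    rw [← ha1]
    nlinarith [key]
  · rw [div_le_div_iff₀ (by norm_num : (0:ℝ) < 3) hden]
    nlinarith
end
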